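/- arXiv:2605.24280 — 2 statements merged into one kernel-verified Lean document; each statement's English description precedes it below -/
import Mathlib

section
/- Let D be a finite directed acyclic graph whose vertex set is partitioned into sources S, internal vertices I, and sinks T, and let u and v be two distinct internal vertices. Then eliminating u and then v yields the same directed graph as eliminating v and then u, i.e., (D/u)/v = (D/v)/u. -/
variable {V : Type*} [DecidableEq V] [Fintype V]

/-- In-neighborhood of `v` in the edge set `E`. -/
def inN (E : Finset (V × V)) (v : V) : Finset V :=
  (E.filter fun p => p.2 = v).image Prod.fst

/-- Out-neighborhood of `v` in the edge set `E`. -/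
def outN (E : Finset (V × V)) (v : V) : Finset V :=
  (E.filter fun p => p.1 = v).image Prod.snd

/-- Elimination of vertex `v`: delete `v` and add an edge from every in-neighbor
to every out-neighbor of `v` (if not already present). -/
def elimv (E : Finset (V × V)) (v : V) : Finset (V × V) :=
  (E ∪ (inN E v) ×ˢ (outN E v)).filter fun p => p.1 ≠ v ∧ p.2 ≠ v

/-- Eliminate a sequence of vertices, in order. -/
def elimSeq (E : Finset (V × V)) (σ : List V) : Finset (V × V) :=
  σ.foldl elimv E

/-- Markowitz degree of `v`: in-degree times out-degree. -/
def mark (E : Finset (V × V)) (v : V) : ℕ :=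
  (inN E v).card * (outN E v).card

/-- Cost of an elimination sequence: sum of the Markowitz degrees at the
time of each elimination. -/
def cost (E : Finset (V × V)) : List V → ℕ
  | [] => 0
  | v :: σ => mark E v + cost (elimv E v) σ

/-- The directed graph with edge set `E` is acyclic. -/
def Acyclic (E : Finset (V × V)) : Prop :=
  ∀ v : V, ¬ Relation.TransGen (fun a b => (a, b) ∈ E) v v

/-- `E` is an acyclic digraph whose vertices are partitioned into sources `S`
(no in-edges), internal vertices `I`, and sinks `T` (no out-edges). -/
def IsDAGPartition (E : Finset (V × V)) (S I T : Finset V) : Prop :=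
  Acyclic E ∧ Disjoint S I ∧ Disjoint S T ∧ Disjoint I T ∧
    S ∪ I ∪ T = Finset.univ ∧ (∀ s ∈ S, inN E s = ∅) ∧ (∀ t ∈ T, outN E t = ∅)

/-- There is a directed path from `i` to `j` all of whose internal vertices
lie in `X` (the single-edge path has no internal vertices). -/
def PathThrough (E : Finset (V × V)) (X : Finset V) (i j : V) : Prop :=
  ∃ l : List V, (∀ v ∈ l, v ∈ X) ∧ List.Chain' (fun a b => (a, b) ∈ E) (i :: (l ++ [j]))


lemma mem_inN {E : Finset (V × V)} {w a : V} : a ∈ inN E w ↔ (a, w) ∈ E := by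
  simp [inN]

lemma mem_outN {E : Finset (V × V)} {w b : V} : b ∈ outN E w ↔ (w, b) ∈ E := by
  simp [outN]

lemma mem_elimv {E : Finset (V × V)} {w : V} {p : V × V} :
    p ∈ elimv E w ↔ p.1 ≠ w ∧ p.2 ≠ w ∧ ((p.1, p.2) ∈ E ∨ ((p.1, w) ∈ E ∧ (w, p.2) ∈ E)) := by
  simp [elimv, mem_inN, mem_outN]
  tauto

/-- eliminating two distinct internal vertices commutes. -/
theorem elim_comm (E : Finset (V × V)) (S I T : Finset V)
    (hD : IsDAGPartition E S I T) (u v : V) (hu : u ∈ I) (hv : v ∈ I) (huv : u ≠ v) :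
    elimv (elimv E u) v = elimv (elimv E v) u := by
  ext ⟨a, b⟩
  simp only [mem_elimv]
  constructor <;> rintro ⟨h1, h2, h3⟩ <;> tauto
end

section
/- Let D be a finite DAG with vertices partitioned into sources S, internal vertices I, and sinks T, let v be an internal vertex, and let i, j be vertices distinct from v. Then j is reachable from i in D/v if and only if j is reachable from i in D. In other words, vertex elimination preserves reachability among the remaining vertices. -/
/-! Every fill-in edge `u → w` of `D/v` is the detour `u → v → w` of `D`. Conversely, along a path
of `D` between vertices other than `v`, each maximal run of visits to `v` is entered from an
in-neighbor `u ≠ v` and left towards an out-neighbor `w ≠ v`, so it collapses to the fill-in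
edge `u → w`. -/

variable {V : Type*} [DecidableEq V] [Fintype V]

section

variable {α : Type*} [DecidableEq α] {E : Finset (α × α)} {v : α}

lemma mem_elimv_s4 {a b : α} :
    (a, b) ∈ elimv E v ↔ a ≠ v ∧ b ≠ v ∧ ((a, b) ∈ E ∨ (a, v) ∈ E ∧ (v, b) ∈ E) := by
  simp only [elimv, inN, outN, Finset.mem_filter, Finset.mem_union, Finset.mem_product,
    Finset.mem_image, Prod.exists, exists_and_right, exists_eq_right]
  tauto

lemma reflTransGen_of_reflTransGen_elimv {i j : α}
    (h : Relation.ReflTransGen (fun a b => (a, b) ∈ elimv E v) i j) :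
    Relation.ReflTransGen (fun a b => (a, b) ∈ E) i j := by
  refine Relation.reflTransGen_closed (fun a b hab => ?_) _ _ h
  obtain ⟨-, -, hE | ⟨hav, hvb⟩⟩ := mem_elimv_s4.1 hab
  · exact .single hE
  · exact .tail (.single hav) hvb

/-- `u` stands for the current vertex `i` of the path: it is `i` itself, or `i = v` and `u` is the
in-neighbor from which the current run of visits to `v` was entered. -/
lemma reflTransGen_elimv_of_reflTransGen {i j : α}
    (h : Relation.ReflTransGen (fun a b => (a, b) ∈ E) i j) (hj : j ≠ v)
    {u : α} (hu : u ≠ v) (hui : u = i ∨ (u, v) ∈ E ∧ i = v) :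
    Relation.ReflTransGen (fun a b => (a, b) ∈ elimv E v) u j := by
  induction h using Relation.ReflTransGen.head_induction_on generalizing u with
  | refl =>
    obtain rfl | ⟨-, rfl⟩ := hui
    · exact .refl
    · exact absurd rfl hj
  | @head i b hib _ ih =>
    by_cases hb : b = v
    · subst hb
      obtain rfl | ⟨huv, -⟩ := hui
      · exact ih hu (.inr ⟨hib, rfl⟩)
      · exact ih hu (.inr ⟨huv, rfl⟩)
    · have hub : (u, b) ∈ elimv E v := by
        obtain rfl | ⟨huv, rfl⟩ := hui
        · exact mem_elimv_s4.2 ⟨hu, hb, .inl hib⟩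
        · exact mem_elimv_s4.2 ⟨hu, hb, .inr ⟨huv, hib⟩⟩
      exact .head hub (ih hb (.inl rfl))

end

theorem elimv_preserves_reachability_general (E : Finset (V × V)) (v : V)
    (i j : V) (hi : i ≠ v) (hj : j ≠ v) :
    Relation.ReflTransGen (fun a b => (a, b) ∈ elimv E v) i j ↔
      Relation.ReflTransGen (fun a b => (a, b) ∈ E) i j :=
  ⟨reflTransGen_of_reflTransGen_elimv,
    fun h => reflTransGen_elimv_of_reflTransGen h hj hi (.inl rfl)⟩

/-- vertex elimination preserves reachability among the
remaining vertices. -/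
theorem elimv_preserves_reachability (E : Finset (V × V)) (S I T : Finset V)
    (hD : IsDAGPartition E S I T) (v : V) (hv : v ∈ I)
    (i j : V) (hi : i ≠ v) (hj : j ≠ v) :
    Relation.ReflTransGen (fun a b => (a, b) ∈ elimv E v) i j ↔
      Relation.ReflTransGen (fun a b => (a, b) ∈ E) i j :=
  elimv_preserves_reachability_general E v i j hi hj
end
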